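/- arXiv:2402.08992 — 2 statements merged into one kernel-verified Lean document; each statement's English description precedes it below -/
import Mathlib

section
/- Assume α ≥ (I/2 + λL)/(1 + I/2 + λL), E[c_0] = f(x_0), E[c_1] = E[φ(x_1)], and E[‖s_i − ∇f(x_i)‖²] ≤ σ² for every 0 ≤ i ≤ I. Then E[t_{I+1}] ≤ α^I·(σD + LD²/2) + λσ²/I. -/
/-!
Pathwise, every model `𝓛_i` is convex, so `𝓛_i^λ` is `1/λ`-strongly convex and its minimizer
satisfies `𝓛_i^λ(x_i) + ‖y - x_i‖² / (2λ) ≤ 𝓛_i^λ(y)` on `s`. Taking `y = x_{i+1}` and combining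
this with the descent lemma for `f` and Young's inequality
`‖s_i - ∇f(x_i)‖ ‖x_{i+1} - x_i‖ ≤ (λ/I) ‖s_i - ∇f(x_i)‖² + (I/(4λ)) ‖x_{i+1} - x_i‖²` gives
`t_{i+1} ≤ α t_i + (1 - α) (λ/I) ‖s_i - ∇f(x_i)‖²`: the condition on `α` is exactly what lets the
proximal term absorb the `‖x_{i+1} - x_i‖²` terms. Taking expectations and unrolling from
`E[t_1] ≤ σD + LD²/2`, which is the descent lemma at `x_0` once the means of `c_0, c_1` cancel,
gives the bound.
-/

open MeasureTheory Filter Topology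
open scoped RealInnerProductSpace

theorem mul_le_mul_sq_add_sq_div_four_mul {ε : ℝ} (hε : 0 < ε) (a b : ℝ) :
    a * b ≤ ε * a ^ 2 + b ^ 2 / (4 * ε) := by
  have key : 0 ≤ (2 * ε * a - b) ^ 2 / (4 * ε) := by positivity
  have expand : (2 * ε * a - b) ^ 2 / (4 * ε) = ε * a ^ 2 + b ^ 2 / (4 * ε) - a * b := by
    field_simp
    ring
  linarith

section InnerProductSpace

variable {E : Type*} [NormedAddCommGroup E] [InnerProductSpace ℝ E]

theorem ConvexOn.const_add_inner_add {s : Set E} {h : E → ℝ} (hh : ConvexOn ℝ s h)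
    (c : ℝ) (v z : E) : ConvexOn ℝ s fun y ↦ c + ⟪v, y - z⟫ + h y := by
  have hlin : ConvexOn ℝ s fun y ↦ ⟪v, y⟫ + (c - ⟪v, z⟫) :=
    ((innerₛₗ ℝ v).convexOn hh.1).add_const _
  refine (hlin.add hh).congr fun y _ ↦ ?_
  simp only [Pi.add_apply, inner_sub_right]
  ring

theorem strongConvexOn_sq_norm_sub {s : Set E} (hs : Convex ℝ s) (m : ℝ) (z : E) :
    StrongConvexOn s m fun y ↦ m / 2 * ‖y - z‖ ^ 2 := by
  rw [strongConvexOn_iff_convex]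
  have hlin : ConvexOn ℝ s fun y ↦ ⟪-m • z, y⟫ + m / 2 * ‖z‖ ^ 2 :=
    ((innerₛₗ ℝ (-m • z)).convexOn hs).add_const _
  refine hlin.congr fun y _ ↦ ?_
  simp only [norm_sub_sq_real, real_inner_smul_left, real_inner_comm y z]
  ring

theorem ConvexOn.strongConvexOn_add_sq_norm_sub {s : Set E} {g : E → ℝ} (hg : ConvexOn ℝ s g)
    (m : ℝ) (z : E) : StrongConvexOn s m fun y ↦ g y + m / 2 * ‖y - z‖ ^ 2 := by
  have := (uniformConvexOn_zero.2 hg).add (strongConvexOn_sq_norm_sub hg.1 m z)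
  rwa [zero_add] at this

theorem StrongConvexOn.add_sq_norm_sub_le_of_isMinOn {s : Set E} {F : E → ℝ} {m : ℝ} {x y : E}
    (hF : StrongConvexOn s m F) (hmin : IsMinOn F s x) (hx : x ∈ s) (hy : y ∈ s) :
    F x + m / 2 * ‖y - x‖ ^ 2 ≤ F y := by
  -- comparing `F x` with `F` on the segment `[x, y]` gives the bound up to a factor `1 - θ`
  have hseg : ∀ θ ∈ Set.Ioo (0 : ℝ) 1, F x + (1 - θ) * (m / 2 * ‖y - x‖ ^ 2) ≤ F y := by
    rintro θ ⟨hθ0, hθ1⟩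
    have hconv := hF.2 hx hy (sub_nonneg.2 hθ1.le) hθ0.le (sub_add_cancel 1 θ)
    have hle := hmin (hF.1 hx hy (sub_nonneg.2 hθ1.le) hθ0.le (sub_add_cancel 1 θ))
    rw [norm_sub_rev] at hconv
    simp only [smul_eq_mul, Set.mem_ofPred_eq] at hconv hle
    nlinarith
  have hlim : Tendsto (fun θ : ℝ ↦ F x + (1 - θ) * (m / 2 * ‖y - x‖ ^ 2)) (𝓝[>] 0)
      (𝓝 (F x + (1 - 0) * (m / 2 * ‖y - x‖ ^ 2))) :=
    (Continuous.tendsto (by fun_prop) 0).mono_left nhdsWithin_le_nhds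
  rw [sub_zero, one_mul] at hlim
  exact le_of_tendsto hlim (eventually_of_mem (Ioo_mem_nhdsGT one_pos) hseg)

end InnerProductSpace

section Gradient

variable {E : Type*} [NormedAddCommGroup E] [InnerProductSpace ℝ E] [CompleteSpace E]
  {f : E → ℝ} {L : ℝ}

theorem le_add_inner_gradient_add_sq_of_lipschitz_gradient (hf : Differentiable ℝ f)
    (hLip : ∀ x y, ‖gradient f x - gradient f y‖ ≤ L * ‖x - y‖) (x y : E) :
    f y ≤ f x + ⟪gradient f x, y - x⟫ + L / 2 * ‖y - x‖ ^ 2 := by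
  set v := y - x
  -- `g` is antitone on `[0, 1]`: its derivative is `⟪∇f(x + t v) - ∇f x, v⟫ - L t ‖v‖² ≤ 0`
  let g : ℝ → ℝ := fun t ↦ f (x + t • v) - t * ⟪gradient f x, v⟫ - L / 2 * t ^ 2 * ‖v‖ ^ 2
  have hg : ∀ t, HasDerivAt g
      (⟪gradient f (x + t • v), v⟫ - ⟪gradient f x, v⟫ - L * t * ‖v‖ ^ 2) t := by
    intro t
    have hline : HasDerivAt (fun t : ℝ ↦ x + t • v) v t := by
      simpa using ((hasDerivAt_id t).smul_const v).const_add x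
    have hcomp : HasDerivAt (fun t ↦ f (x + t • v)) ⟪gradient f (x + t • v), v⟫ t := by
      simpa [Function.comp_def] using
        (hf (x + t • v)).hasGradientAt.hasFDerivAt.comp_hasDerivAt t hline
    refine ((hcomp.sub ((hasDerivAt_id' t).mul_const ⟪gradient f x, v⟫)).sub
      (((hasDerivAt_pow 2 t).const_mul (L / 2)).mul_const (‖v‖ ^ 2))).congr_deriv ?_
    push_cast
    ring
  have hanti : AntitoneOn g (Set.Icc 0 1) := by
    refine antitoneOn_of_deriv_nonpos (convex_Icc 0 1)
      (fun t _ ↦ (hg t).continuousAt.continuousWithinAt)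
      (fun t _ ↦ (hg t).differentiableAt.differentiableWithinAt) fun t ht ↦ ?_
    rw [interior_Icc] at ht
    rw [(hg t).deriv, sub_nonpos, ← inner_sub_left]
    calc ⟪gradient f (x + t • v) - gradient f x, v⟫
        ≤ ‖gradient f (x + t • v) - gradient f x‖ * ‖v‖ := real_inner_le_norm _ _
      _ ≤ L * ‖x + t • v - x‖ * ‖v‖ := by gcongr; exact hLip _ _
      _ = L * t * ‖v‖ ^ 2 := by
        rw [add_sub_cancel_left, norm_smul, Real.norm_of_nonneg ht.1.le]
        ring
  have h01 := hanti (Set.left_mem_Icc.2 zero_le_one) (Set.right_mem_Icc.2 zero_le_one)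
    zero_le_one
  simp only [g, zero_smul, add_zero, one_smul, v, add_sub_cancel] at h01
  linarith

theorem sub_sub_inner_le_of_lipschitz_gradient (hf : Differentiable ℝ f)
    (hLip : ∀ x y, ‖gradient f x - gradient f y‖ ≤ L * ‖x - y‖) (v x y : E) :
    f y - f x - ⟪v, y - x⟫ ≤ ‖v - gradient f x‖ * ‖y - x‖ + L / 2 * ‖y - x‖ ^ 2 := by
  have hdesc := le_add_inner_gradient_add_sq_of_lipschitz_gradient hf hLip x y
  have hinner : ⟪gradient f x - v, y - x⟫ ≤ ‖v - gradient f x‖ * ‖y - x‖ :=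
    norm_sub_rev v (gradient f x) ▸ real_inner_le_norm _ _
  rw [inner_sub_left] at hinner
  linarith

end Gradient

section Recursion

variable {E : Type*} [NormedAddCommGroup E] [InnerProductSpace ℝ E]

theorem convexOn_of_recursion {s : Set E} {h : E → ℝ} {α : ℝ} {n : ℕ} {a : ℕ → ℝ}
    {v z : ℕ → E} {𝓛 : ℕ → E → ℝ} (hh : ConvexOn ℝ s h) (hα0 : 0 ≤ α) (hα1 : α ≤ 1)
    (h𝓛1 : ConvexOn ℝ s (𝓛 1))
    (h𝓛rec : ∀ i, 2 ≤ i → i ≤ n → ∀ y, 𝓛 i y =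
      α * 𝓛 (i - 1) y + (1 - α) * (a (i - 1) + ⟪v (i - 1), y - z (i - 1)⟫ + h y)) :
    ∀ i, 1 ≤ i → i ≤ n → ConvexOn ℝ s (𝓛 i) := by
  intro i hi
  induction i, hi using Nat.le_induction with
  | base => exact fun _ ↦ h𝓛1
  | succ i hi ih =>
    intro hin
    refine (((ih (by omega)).smul hα0).add
      ((hh.const_add_inner_add (a i) (v i) (z i)).smul (sub_nonneg.2 hα1))).congr fun y _ ↦ ?_
    simp [h𝓛rec (i + 1) (by omega) hin y]

variable [CompleteSpace E]

theorem gap_succ_le {s : Set E} {f h 𝓛 : E → ℝ} {L lam α k u u' ℓ' : ℝ} {x0 x x' v : E}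
    (hf : Differentiable ℝ f) (hLip : ∀ x y, ‖gradient f x - gradient f y‖ ≤ L * ‖x - y‖)
    (hlam : 0 < lam) (hk : 0 < k) (hα0 : 0 ≤ α) (hα1 : α ≤ 1)
    (hαk : (1 - α) * (k / 2 + lam * L) ≤ α)
    (h𝓛 : ConvexOn ℝ s 𝓛) (hmin : IsMinOn (fun y ↦ 𝓛 y + 1 / (2 * lam) * ‖y - x0‖ ^ 2) s x)
    (hx : x ∈ s) (hx' : x' ∈ s)
    (hℓ' : ℓ' = α * 𝓛 x' + (1 - α) * (f x + ⟪v, x' - x⟫ + h x'))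
    (hu' : u' = α * u + (1 - α) * (f x' + h x' + 1 / (2 * lam) * ‖x' - x0‖ ^ 2)) :
    u' - (ℓ' + 1 / (2 * lam) * ‖x' - x0‖ ^ 2) ≤
      α * (u - (𝓛 x + 1 / (2 * lam) * ‖x - x0‖ ^ 2)) +
        (1 - α) * (lam / k) * ‖v - gradient f x‖ ^ 2 := by
  have hm : 1 / lam / 2 = 1 / (2 * lam) := by ring
  have hgrowth := (h𝓛.strongConvexOn_add_sq_norm_sub (1 / lam) x0).add_sq_norm_sub_le_of_isMinOn
    (hm ▸ hmin) hx hx'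
  simp only [hm] at hgrowth
  have hdesc := sub_sub_inner_le_of_lipschitz_gradient hf hLip v x x'
  have hyoung :=
    mul_le_mul_sq_add_sq_div_four_mul (div_pos hlam hk) ‖v - gradient f x‖ ‖x' - x‖
  have hweight : (1 - α) * (L / 2 + 1 / (4 * (lam / k))) ≤ α * (1 / (2 * lam)) := by
    have e : (1 - α) * (L / 2 + 1 / (4 * (lam / k))) =
        (1 - α) * (k / 2 + lam * L) / (2 * lam) := by
      field_simp
      ring
    rw [e, ← mul_div_assoc, mul_one]
    exact div_le_div_of_nonneg_right hαk (by positivity)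
  have h1 := mul_le_mul_of_nonneg_left hgrowth hα0
  have h2 := mul_le_mul_of_nonneg_left hdesc (sub_nonneg.2 hα1)
  have h3 := mul_le_mul_of_nonneg_left hyoung (sub_nonneg.2 hα1)
  have h4 := mul_le_mul_of_nonneg_left hweight (sq_nonneg ‖x' - x‖)
  rw [hℓ', hu']
  linear_combination h1 + h2 + h3 + h4

theorem gap_succ_le_of_recursion {s : Set E} {f h : E → ℝ} {L lam α k c : ℝ} {n : ℕ} {x0 : E}
    {x v : ℕ → E} {𝓛 : ℕ → E → ℝ} {u t : ℕ → ℝ}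
    (hf : Differentiable ℝ f) (hLip : ∀ x y, ‖gradient f x - gradient f y‖ ≤ L * ‖x - y‖)
    (hh : ConvexOn ℝ s h) (hlam : 0 < lam) (hk : 0 < k) (hα0 : 0 ≤ α) (hα1 : α ≤ 1)
    (hαk : (1 - α) * (k / 2 + lam * L) ≤ α)
    (h𝓛1 : ∀ y, 𝓛 1 y = c + ⟪v 0, y - x0⟫ + h y)
    (h𝓛rec : ∀ i, 2 ≤ i → i ≤ n → ∀ y, 𝓛 i y =
      α * 𝓛 (i - 1) y + (1 - α) * (f (x (i - 1)) + ⟪v (i - 1), y - x (i - 1)⟫ + h y))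
    (hxmem : ∀ i, 1 ≤ i → i ≤ n → x i ∈ s)
    (hxmin : ∀ i, 1 ≤ i → i ≤ n → ∀ y ∈ s,
      𝓛 i (x i) + 1 / (2 * lam) * ‖x i - x0‖ ^ 2 ≤ 𝓛 i y + 1 / (2 * lam) * ‖y - x0‖ ^ 2)
    (hurec : ∀ i, 2 ≤ i → i ≤ n → u i =
      α * u (i - 1) + (1 - α) * (f (x i) + h (x i) + 1 / (2 * lam) * ‖x i - x0‖ ^ 2))
    (ht : ∀ i, t i = u i - (𝓛 i (x i) + 1 / (2 * lam) * ‖x i - x0‖ ^ 2)) :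
    ∀ i, 1 ≤ i → i < n →
      t (i + 1) ≤ α * t i + (1 - α) * (lam / k) * ‖v i - gradient f (x i)‖ ^ 2 := by
  intro i hi hin
  have hconvex := convexOn_of_recursion (a := (f <| x ·)) hh hα0 hα1
    ((hh.const_add_inner_add c (v 0) x0).congr fun y _ ↦ (h𝓛1 y).symm) h𝓛rec i hi hin.le
  have h𝓛' := h𝓛rec (i + 1) (by omega) hin (x (i + 1))
  have hu' := hurec (i + 1) (by omega) hin
  rw [Nat.add_sub_cancel] at h𝓛' hu'
  rw [ht, ht]
  exact gap_succ_le hf hLip hlam hk hα0 hα1 hαk hconvex (isMinOn_iff.2 (hxmin i hi hin.le))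
    (hxmem i hi hin.le) (hxmem (i + 1) (by omega) hin) h𝓛' hu'

end Recursion

section Expectation

variable {Ω : Type*} [MeasurableSpace Ω] {P : Measure Ω}

theorem le_pow_mul_add_of_le_mul_add {a : ℕ → ℝ} {α b : ℝ} (hα : 0 ≤ α) {n : ℕ}
    (h : ∀ k < n, a (k + 1) ≤ α * a k + (1 - α) * b) :
    a n ≤ α ^ n * a 0 + (1 - α ^ n) * b := by
  induction n with
  | zero => simp
  | succ n ih =>
    have hprev := mul_le_mul_of_nonneg_left (ih fun k hk ↦ h k (by omega)) hα
    have hstep := h n n.lt_add_one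
    rw [pow_succ]
    linarith

theorem integral_le_mul_integral_add_of_le {X Y Z : Ω → ℝ} {α β c : ℝ}
    (hX : Integrable X P) (hY : Integrable Y P) (hZ : Integrable Z P) (hβ : 0 ≤ β)
    (hZc : ∫ ω, Z ω ∂P ≤ c) (hXY : ∀ ω, Y ω ≤ α * X ω + β * Z ω) :
    ∫ ω, Y ω ∂P ≤ α * ∫ ω, X ω ∂P + β * c := by
  calc ∫ ω, Y ω ∂P ≤ ∫ ω, α * X ω + β * Z ω ∂P :=
        integral_mono hY ((hX.const_mul α).add (hZ.const_mul β)) hXY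
    _ = α * ∫ ω, X ω ∂P + β * ∫ ω, Z ω ∂P := by
        rw [integral_add (hX.const_mul α) (hZ.const_mul β), integral_const_mul,
          integral_const_mul]
    _ ≤ α * ∫ ω, X ω ∂P + β * c := by gcongr

theorem integral_le_pow_mul_add_of_le_mul_add {T V : ℕ → Ω → ℝ} {α β c : ℝ} {n : ℕ}
    (hα0 : 0 ≤ α) (hα1 : α ≤ 1) (hβ : 0 ≤ β) (hc : 0 ≤ c)
    (hT : ∀ i, 1 ≤ i → i ≤ n + 1 → Integrable (T i) P)
    (hV : ∀ i, 1 ≤ i → i ≤ n → Integrable (V i) P)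
    (hVc : ∀ i, 1 ≤ i → i ≤ n → ∫ ω, V i ω ∂P ≤ c)
    (hstep : ∀ i, 1 ≤ i → i ≤ n → ∀ ω, T (i + 1) ω ≤ α * T i ω + (1 - α) * β * V i ω) :
    ∫ ω, T (n + 1) ω ∂P ≤ α ^ n * ∫ ω, T 1 ω ∂P + β * c := by
  have hunrolled := le_pow_mul_add_of_le_mul_add (a := fun k ↦ ∫ ω, T (k + 1) ω ∂P)
    (b := β * c) hα0 (n := n) fun k hk ↦ by
      have := integral_le_mul_integral_add_of_le (hT (k + 1) (by omega) (by omega))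
        (hT (k + 1 + 1) (by omega) (by omega)) (hV (k + 1) (by omega) hk)
        (mul_nonneg (sub_nonneg.2 hα1) hβ) (hVc (k + 1) (by omega) hk)
        (hstep (k + 1) (by omega) hk)
      linear_combination this
  have : 0 ≤ α ^ n * (β * c) := by positivity
  linarith

variable [IsProbabilityMeasure P] {E : Type*} [NormedAddCommGroup E] [InnerProductSpace ℝ E]
  [CompleteSpace E]

theorem integral_first_gap_le {f h : E → ℝ} {L D σ : ℝ} {x0 : E} {T c0 c1 : Ω → ℝ}
    {y v : Ω → E} (hf : Differentiable ℝ f)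
    (hLip : ∀ x y, ‖gradient f x - gradient f y‖ ≤ L * ‖x - y‖) (hL : 0 ≤ L) (hD : 0 < D)
    (hσ : 0 < σ) (hy : ∀ ω, ‖y ω - x0‖ ≤ D)
    (hT : ∀ ω, T ω = c1 ω - (c0 ω + ⟪v ω, y ω - x0⟫ + h (y ω)))
    (hT_int : Integrable T P) (hc0 : Integrable c0 P) (hc1 : Integrable c1 P)
    (hφ : Integrable (fun ω ↦ f (y ω) + h (y ω)) P)
    (hv : Integrable (fun ω ↦ ‖v ω - gradient f x0‖ ^ 2) P)
    (hmean0 : ∫ ω, c0 ω ∂P = f x0) (hmean1 : ∫ ω, c1 ω ∂P = ∫ ω, f (y ω) + h (y ω) ∂P)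
    (hvar : ∫ ω, ‖v ω - gradient f x0‖ ^ 2 ∂P ≤ σ ^ 2) :
    ∫ ω, T ω ∂P ≤ σ * D + L * D ^ 2 / 2 := by
  set ε := D / (2 * σ)
  have hε : 0 < ε := by positivity
  have hbound : ∀ ω, T ω ≤ (c1 ω - (f (y ω) + h (y ω))) - (c0 ω - f x0) +
      (ε * ‖v ω - gradient f x0‖ ^ 2 + (D ^ 2 / (4 * ε) + L / 2 * D ^ 2)) := by
    intro ω
    have hdesc := sub_sub_inner_le_of_lipschitz_gradient hf hLip (v ω) x0 (y ω)
    have hyoung := mul_le_mul_sq_add_sq_div_four_mul hε ‖v ω - gradient f x0‖ D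
    have hlin : ‖v ω - gradient f x0‖ * ‖y ω - x0‖ ≤ ‖v ω - gradient f x0‖ * D :=
      mul_le_mul_of_nonneg_left (hy ω) (norm_nonneg _)
    have hsq : L / 2 * ‖y ω - x0‖ ^ 2 ≤ L / 2 * D ^ 2 := by
      gcongr
      exact hy ω
    rw [hT]
    linarith
  have hc1φ : Integrable (fun ω ↦ c1 ω - (f (y ω) + h (y ω))) P := hc1.sub hφ
  have hc0f : Integrable (fun ω ↦ c0 ω - f x0) P := hc0.sub (integrable_const _)
  have hmeans : Integrable (fun ω ↦ c1 ω - (f (y ω) + h (y ω)) - (c0 ω - f x0)) P :=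
    hc1φ.sub hc0f
  have hrest : Integrable
      (fun ω ↦ ε * ‖v ω - gradient f x0‖ ^ 2 + (D ^ 2 / (4 * ε) + L / 2 * D ^ 2)) P :=
    (hv.const_mul ε).add (integrable_const _)
  calc ∫ ω, T ω ∂P ≤ ∫ ω, (c1 ω - (f (y ω) + h (y ω)) - (c0 ω - f x0)) +
        (ε * ‖v ω - gradient f x0‖ ^ 2 + (D ^ 2 / (4 * ε) + L / 2 * D ^ 2)) ∂P :=
        integral_mono hT_int (hmeans.add hrest) hbound
    _ = ε * ∫ ω, ‖v ω - gradient f x0‖ ^ 2 ∂P + (D ^ 2 / (4 * ε) + L / 2 * D ^ 2) := by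
        rw [integral_add hmeans hrest, integral_sub hc1φ hc0f, integral_sub hc1 hφ,
          integral_sub hc0 (integrable_const _), integral_add (hv.const_mul ε) (integrable_const _),
          integral_const_mul, hmean0, hmean1]
        simp
    _ ≤ ε * σ ^ 2 + (D ^ 2 / (4 * ε) + L / 2 * D ^ 2) := by gcongr
    _ = σ * D + L * D ^ 2 / 2 := by
        simp only [ε]
        field_simp
        ring

end Expectation

theorem stmt_10_general {d : ℕ} {Ω : Type*} [MeasurableSpace Ω] (P : Measure Ω)
    [IsProbabilityMeasure P]
    (f : EuclideanSpace ℝ (Fin d) → ℝ) (hf : Differentiable ℝ f)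
    (L : ℝ) (hL : 0 < L)
    (hLip : ∀ x y, ‖gradient f x - gradient f y‖ ≤ L * ‖x - y‖)
    (s : Set (EuclideanSpace ℝ (Fin d)))
    (h : EuclideanSpace ℝ (Fin d) → ℝ) (hconv : ConvexOn ℝ s h)
    (D : ℝ) (hD : 0 < D) (hdiam : ∀ x ∈ s, ∀ y ∈ s, dist x y ≤ D)
    (lam : ℝ) (hlam : 0 < lam) (I : ℕ) (hI : 1 ≤ I)
    (α : ℝ) (hα : α ∈ Set.Ioo (0 : ℝ) 1) (σ : ℝ) (hσ : 0 < σ)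
    (x0 : EuclideanSpace ℝ (Fin d)) (hx0 : x0 ∈ s)
    (svec : ℕ → Ω → EuclideanSpace ℝ (Fin d)) (c0 c1 : Ω → ℝ)
    (x : ℕ → Ω → EuclideanSpace ℝ (Fin d))
    (hx0' : ∀ ω, x 0 ω = x0)
    (𝓛 : ℕ → Ω → EuclideanSpace ℝ (Fin d) → ℝ)
    (h𝓛1 : ∀ ω y, 𝓛 1 ω y = c0 ω + ⟪svec 0 ω, y - x0⟫ + h y)
    (h𝓛rec : ∀ i, 2 ≤ i → i ≤ I + 1 → ∀ ω y, 𝓛 i ω y =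
      α * 𝓛 (i - 1) ω y +
        (1 - α) * (f (x (i - 1) ω) + ⟪svec (i - 1) ω, y - x (i - 1) ω⟫ + h y))
    -- `x_i(ω)` is the minimizer of `𝓛_i^λ(ω, ·)`:
    (hxmem : ∀ i, 1 ≤ i → i ≤ I + 1 → ∀ ω, x i ω ∈ s)
    (hxmin : ∀ i, 1 ≤ i → i ≤ I + 1 → ∀ ω, ∀ y ∈ s,
      𝓛 i ω (x i ω) + 1 / (2 * lam) * ‖x i ω - x0‖ ^ 2 ≤
        𝓛 i ω y + 1 / (2 * lam) * ‖y - x0‖ ^ 2)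
    (u : ℕ → Ω → ℝ)
    (hu1 : ∀ ω, u 1 ω = c1 ω + 1 / (2 * lam) * ‖x 1 ω - x0‖ ^ 2)
    (hurec : ∀ i, 2 ≤ i → i ≤ I + 1 → ∀ ω, u i ω =
      α * u (i - 1) ω + (1 - α) * (f (x i ω) + h (x i ω) + 1 / (2 * lam) * ‖x i ω - x0‖ ^ 2))
    (t : ℕ → Ω → ℝ)
    (ht : ∀ i ω, t i ω = u i ω - (𝓛 i ω (x i ω) + 1 / (2 * lam) * ‖x i ω - x0‖ ^ 2))
    -- integrability of the quantities appearing below: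
    (hint_t : ∀ i, 1 ≤ i → i ≤ I + 1 → Integrable (t i) P)
    (hint_c0 : Integrable c0 P) (hint_c1 : Integrable c1 P)
    (hint_phi1 : Integrable (fun ω => f (x 1 ω) + h (x 1 ω)) P)
    (hint_var : ∀ i ≤ I, Integrable (fun ω => ‖svec i ω - gradient f (x i ω)‖ ^ 2) P)
    -- the assumptions on the mean and the variance:
    (hαbound : ((I : ℝ) / 2 + lam * L) / (1 + (I : ℝ) / 2 + lam * L) ≤ α)
    (hmean0 : ∫ ω, c0 ω ∂P = f x0)
    (hmean1 : ∫ ω, c1 ω ∂P = ∫ ω, (f (x 1 ω) + h (x 1 ω)) ∂P)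
    (hvar : ∀ i ≤ I, ∫ ω, ‖svec i ω - gradient f (x i ω)‖ ^ 2 ∂P ≤ σ ^ 2) :
    ∫ ω, t (I + 1) ω ∂P ≤ α ^ I * (σ * D + L * D ^ 2 / 2) + lam * σ ^ 2 / I := by
  have hα0 := hα.1.le
  have hα1 := hα.2.le
  have hI' : (0 : ℝ) < I := by exact_mod_cast hI
  have hαI : (1 - α) * (I / 2 + lam * L) ≤ α := by
    rw [div_le_iff₀ (by positivity)] at hαbound
    linarith
  have hpath (ω : Ω) := gap_succ_le_of_recursion (𝓛 := (𝓛 · ω)) (x := (x · ω))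
    (v := (svec · ω)) (u := (u · ω)) (t := (t · ω)) hf hLip hconv hlam hI' hα0 hα1 hαI
    (h𝓛1 ω) (h𝓛rec · · · ω) (hxmem · · · ω) (hxmin · · · ω) (hurec · · · ω) (ht · ω)
  have hfirst : ∫ ω, t 1 ω ∂P ≤ σ * D + L * D ^ 2 / 2 :=
    integral_first_gap_le hf hLip hL.le hD hσ
      (fun ω ↦ dist_eq_norm (x 1 ω) x0 ▸ hdiam _ (hxmem 1 le_rfl (by omega) ω) _ hx0)
      (fun ω ↦ by rw [ht, hu1, h𝓛1]; ring) (hint_t 1 le_rfl (by omega)) hint_c0 hint_c1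
      hint_phi1 (by simpa only [hx0'] using hint_var 0 (by omega)) hmean0 hmean1
      (by simpa only [hx0'] using hvar 0 (by omega))
  calc ∫ ω, t (I + 1) ω ∂P ≤ α ^ I * ∫ ω, t 1 ω ∂P + lam / I * σ ^ 2 :=
        integral_le_pow_mul_add_of_le_mul_add hα0 hα1 (by positivity) (sq_nonneg σ) hint_t
          (fun i _ hi ↦ hint_var i hi) (fun i _ hi ↦ hvar i hi)
          fun i hi hiI ω ↦ hpath ω i hi (by omega)
    _ ≤ α ^ I * (σ * D + L * D ^ 2 / 2) + lam * σ ^ 2 / I := by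
        rw [div_mul_eq_mul_div]
        gcongr

/-- Stochastic version of the PSS recursion: with random stochastic
gradients `s_0, …, s_I`, random reals `c_0, c_1`, the pathwise-defined models `𝓛_i`,
minimizers `x_i`, upper estimates `u_i`, and gaps `t_i = u_i - 𝓛_i^λ(x_i)`,
if `α ≥ (I/2 + λL)/(1 + I/2 + λL)`, `E[c_0] = f(x_0)`, `E[c_1] = E[φ(x_1)]` and
`E[‖s_i - ∇f(x_i)‖²] ≤ σ²` for `0 ≤ i ≤ I`, then
`E[t_{I+1}] ≤ α^I (σ D + L D²/2) + λ σ² / I`. -/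
theorem stmt_10 {d : ℕ} {Ω : Type*} [MeasurableSpace Ω] (P : Measure Ω)
    [IsProbabilityMeasure P]
    (f : EuclideanSpace ℝ (Fin d) → ℝ) (hf : Differentiable ℝ f)
    (L : ℝ) (hL : 0 < L)
    (hLip : ∀ x y, ‖gradient f x - gradient f y‖ ≤ L * ‖x - y‖)
    (s : Set (EuclideanSpace ℝ (Fin d))) (hs : s.Nonempty) (hcl : IsClosed s)
    (h : EuclideanSpace ℝ (Fin d) → ℝ) (hconv : ConvexOn ℝ s h)
    (hlsc : LowerSemicontinuousOn h s)
    (D : ℝ) (hD : 0 < D) (hdiam : ∀ x ∈ s, ∀ y ∈ s, dist x y ≤ D)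
    (lam : ℝ) (hlam : 0 < lam) (I : ℕ) (hI : 1 ≤ I)
    (α : ℝ) (hα : α ∈ Set.Ioo (0 : ℝ) 1) (σ : ℝ) (hσ : 0 < σ)
    (x0 : EuclideanSpace ℝ (Fin d)) (hx0 : x0 ∈ s)
    (svec : ℕ → Ω → EuclideanSpace ℝ (Fin d)) (c0 c1 : Ω → ℝ)
    (x : ℕ → Ω → EuclideanSpace ℝ (Fin d))
    (hx0' : ∀ ω, x 0 ω = x0)
    (𝓛 : ℕ → Ω → EuclideanSpace ℝ (Fin d) → ℝ)
    (h𝓛1 : ∀ ω y, 𝓛 1 ω y = c0 ω + ⟪svec 0 ω, y - x0⟫ + h y)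
    (h𝓛rec : ∀ i, 2 ≤ i → i ≤ I + 1 → ∀ ω y, 𝓛 i ω y =
      α * 𝓛 (i - 1) ω y +
        (1 - α) * (f (x (i - 1) ω) + ⟪svec (i - 1) ω, y - x (i - 1) ω⟫ + h y))
    -- `x_i(ω)` is the minimizer of `𝓛_i^λ(ω, ·)`:
    (hxmem : ∀ i, 1 ≤ i → i ≤ I + 1 → ∀ ω, x i ω ∈ s)
    (hxmin : ∀ i, 1 ≤ i → i ≤ I + 1 → ∀ ω, ∀ y ∈ s,
      𝓛 i ω (x i ω) + 1 / (2 * lam) * ‖x i ω - x0‖ ^ 2 ≤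
        𝓛 i ω y + 1 / (2 * lam) * ‖y - x0‖ ^ 2)
    (u : ℕ → Ω → ℝ)
    (hu1 : ∀ ω, u 1 ω = c1 ω + 1 / (2 * lam) * ‖x 1 ω - x0‖ ^ 2)
    (hurec : ∀ i, 2 ≤ i → i ≤ I + 1 → ∀ ω, u i ω =
      α * u (i - 1) ω + (1 - α) * (f (x i ω) + h (x i ω) + 1 / (2 * lam) * ‖x i ω - x0‖ ^ 2))
    (t : ℕ → Ω → ℝ)
    (ht : ∀ i ω, t i ω = u i ω - (𝓛 i ω (x i ω) + 1 / (2 * lam) * ‖x i ω - x0‖ ^ 2))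
    -- integrability of the quantities appearing below:
    (hint_t : ∀ i, 1 ≤ i → i ≤ I + 1 → Integrable (t i) P)
    (hint_c0 : Integrable c0 P) (hint_c1 : Integrable c1 P)
    (hint_phi1 : Integrable (fun ω => f (x 1 ω) + h (x 1 ω)) P)
    (hint_var : ∀ i ≤ I, Integrable (fun ω => ‖svec i ω - gradient f (x i ω)‖ ^ 2) P)
    (hint_nrm : ∀ i ≤ I, Integrable (fun ω => ‖svec i ω - gradient f (x i ω)‖) P)
    -- the assumptions on the mean and the variance:
    (hαbound : ((I : ℝ) / 2 + lam * L) / (1 + (I : ℝ) / 2 + lam * L) ≤ α)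
    (hmean0 : ∫ ω, c0 ω ∂P = f x0)
    (hmean1 : ∫ ω, c1 ω ∂P = ∫ ω, (f (x 1 ω) + h (x 1 ω)) ∂P)
    (hvar : ∀ i ≤ I, ∫ ω, ‖svec i ω - gradient f (x i ω)‖ ^ 2 ∂P ≤ σ ^ 2) :
    ∫ ω, t (I + 1) ω ∂P ≤ α ^ I * (σ * D + L * D ^ 2 / 2) + lam * σ ^ 2 / I :=
  stmt_10_general P f hf L hL hLip s h hconv D hD hdiam lam hlam I hI α hα σ hσ x0 hx0 svec c0 c1 x
    hx0' 𝓛 h𝓛1 h𝓛rec hxmem hxmin u hu1 hurec t ht hint_t hint_c0 hint_c1 hint_phi1 hint_var hαbound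
    hmean0 hmean1 hvar
end

section
/- Assume (i) for every x ∈ dom h, φ(x) ≥ E[φ(w) + ⟨v, x − w⟩ − η], and (ii) E[φ(w) + (1/(2λ))‖w − z̄‖² − G − (1/(2λ))‖z − z̄‖²] ≤ ε. Then with probability at least 3/4, φ(w) + (1/(2λ))‖w − z̄‖² − φ(ẑ) − (1/(2λ))‖ẑ − z̄‖² + ((1+λμ)/(λ(2+λμ)))‖ẑ − z‖² ≤ 8ε. -/
open MeasureTheory
open scoped RealInnerProductSpace ENNReal

/-! Write `Φ x = φ x + ‖x - z̄‖² / (2λ)`. Adding assumption (i) at `x = ẑ` to (ii), the terms in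
`G` and `‖z - z̄‖²` cancel by the three-point identity for `⟪v, ẑ - z⟫`, leaving
`E[Φ w - Φ ẑ] + E‖ẑ - z‖² / (2λ) ≤ ε`. As `Φ w ≥ Φ ẑ` almost surely and
`(1 + λμ) / (λ(2 + λμ)) ≤ 1 / λ`, the nonnegative variable
`Φ w - Φ ẑ + (1 + λμ) / (λ(2 + λμ)) ‖ẑ - z‖²` has mean at most `2ε`, and Markov's inequality at
level `8ε` bounds the probability of exceeding it by `1/4`. -/

section

variable {Ω : Type*} [MeasurableSpace Ω] {P : Measure Ω}

theorem ofReal_one_sub_integral_div_le_measure_le [IsProbabilityMeasure P] {Y : Ω → ℝ}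
    (hY : 0 ≤ᵐ[P] Y) (hY_int : Integrable Y P) {t : ℝ} (ht : 0 < t) :
    ENNReal.ofReal (1 - (∫ ω, Y ω ∂P) / t) ≤ P {ω | Y ω ≤ t} := by
  have hMarkov := mul_meas_ge_le_integral_of_nonneg hY hY_int t
  have hcover : 1 ≤ P.real {ω | t ≤ Y ω} + P.real {ω | Y ω ≤ t} := by
    calc (1 : ℝ) = P.real ({ω | t ≤ Y ω} ∪ {ω | Y ω ≤ t}) := by
          rw [← probReal_univ (μ := P)]; congr 1; ext ω; simp [le_total]
      _ ≤ _ := measureReal_union_le _ _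
  have hdev : P.real {ω | t ≤ Y ω} ≤ (∫ ω, Y ω ∂P) / t := by
    rw [le_div_iff₀ ht]; linarith
  rw [ENNReal.ofReal_le_iff_le_toReal (measure_ne_top _ _), ← measureReal_def]
  linarith

variable {E : Type*} [NormedAddCommGroup E]

theorem integrable_norm_sub_sq_of_ae_mem [IsFiniteMeasure P] {X : Ω → E}
    (hX : AEStronglyMeasurable X P) {s : Set E} (hs : Bornology.IsBounded s)
    (hXs : ∀ᵐ ω ∂P, X ω ∈ s) (y : E) : Integrable (fun ω => ‖X ω - y‖ ^ 2) P := by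
  obtain ⟨R, hR⟩ := hs.exists_norm_le
  refine .of_bound ((hX.sub aestronglyMeasurable_const).norm.pow 2) ((R + ‖y‖) ^ 2) ?_
  filter_upwards [hXs] with ω hω
  rw [Real.norm_of_nonneg (by positivity)]
  have := (norm_sub_le (X ω) y).trans (add_le_add_left (hR _ hω) _)
  gcongr

theorem integral_prox_excess_le [IsProbabilityMeasure P] {φ : E → ℝ} {w z : Ω → E}
    {lam c ε : ℝ} {zbar zhat : E} (hφw : Integrable (fun ω => φ (w ω)) P)
    (hnw : Integrable (fun ω => ‖w ω - zbar‖ ^ 2) P)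
    (hnzz : Integrable (fun ω => ‖zhat - z ω‖ ^ 2) P)
    (hmin : ∀ᵐ ω ∂P, φ zhat + 1 / (2 * lam) * ‖zhat - zbar‖ ^ 2 ≤
      φ (w ω) + 1 / (2 * lam) * ‖w ω - zbar‖ ^ 2)
    (hc : c ≤ 2 * (1 / (2 * lam)))
    (hgap : ∫ ω, (φ (w ω) + 1 / (2 * lam) * ‖w ω - zbar‖ ^ 2 +
      1 / (2 * lam) * ‖zhat - z ω‖ ^ 2) ∂P ≤ φ zhat + 1 / (2 * lam) * ‖zhat - zbar‖ ^ 2 + ε) :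
    ∫ ω, (φ (w ω) + 1 / (2 * lam) * ‖w ω - zbar‖ ^ 2 -
      (φ zhat + 1 / (2 * lam) * ‖zhat - zbar‖ ^ 2) + c * ‖zhat - z ω‖ ^ 2) ∂P ≤ 2 * ε := by
  have hX_int : Integrable (fun ω => φ (w ω) + 1 / (2 * lam) * ‖w ω - zbar‖ ^ 2 +
      1 / (2 * lam) * ‖zhat - z ω‖ ^ 2) P :=
    (hφw.add (hnw.const_mul _)).add (hnzz.const_mul _)
  have hY_int : Integrable (fun ω => φ (w ω) + 1 / (2 * lam) * ‖w ω - zbar‖ ^ 2 -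
      (φ zhat + 1 / (2 * lam) * ‖zhat - zbar‖ ^ 2) + c * ‖zhat - z ω‖ ^ 2) P :=
    ((hφw.add (hnw.const_mul _)).sub (integrable_const _)).add (hnzz.const_mul _)
  calc _ ≤ ∫ ω, (2 * (φ (w ω) + 1 / (2 * lam) * ‖w ω - zbar‖ ^ 2 +
          1 / (2 * lam) * ‖zhat - z ω‖ ^ 2) -
          2 * (φ zhat + 1 / (2 * lam) * ‖zhat - zbar‖ ^ 2)) ∂P := by
        refine integral_mono_ae hY_int ((hX_int.const_mul 2).sub (integrable_const _)) ?_
        filter_upwards [hmin] with ω hω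
        nlinarith [mul_le_mul_of_nonneg_right hc (sq_nonneg ‖zhat - z ω‖)]
    _ = 2 * ∫ ω, (φ (w ω) + 1 / (2 * lam) * ‖w ω - zbar‖ ^ 2 +
          1 / (2 * lam) * ‖zhat - z ω‖ ^ 2) ∂P -
          2 * (φ zhat + 1 / (2 * lam) * ‖zhat - zbar‖ ^ 2) := by
        rw [integral_sub (hX_int.const_mul 2) (integrable_const _), integral_const_mul,
          integral_const, probReal_univ, one_smul]
    _ ≤ 2 * ε := by linarith

variable [InnerProductSpace ℝ E]

theorem inner_inv_smul_sub_sub_eq (lam : ℝ) (zbar z x : E) :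
    ⟪lam⁻¹ • (zbar - z), x - z⟫ =
      1 / (2 * lam) * (‖z - zbar‖ ^ 2 + ‖x - z‖ ^ 2 - ‖x - zbar‖ ^ 2) := by
  have h := norm_sub_sq_real (zbar - z) (x - z)
  rw [sub_sub_sub_cancel_right, norm_sub_rev zbar x, norm_sub_rev zbar z] at h
  rw [real_inner_smul_left, h]
  ring

theorem integral_prox_gap_le [IsProbabilityMeasure P] {φ : E → ℝ} {G : Ω → ℝ} {w z : Ω → E}
    {lam ε : ℝ} {zbar zhat : E} (hφw : Integrable (fun ω => φ (w ω)) P) (hG : Integrable G P)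
    (hnw : Integrable (fun ω => ‖w ω - zbar‖ ^ 2) P)
    (hnz : Integrable (fun ω => ‖z ω - zbar‖ ^ 2) P)
    (hnzz : Integrable (fun ω => ‖zhat - z ω‖ ^ 2) P)
    (h₁ : ∫ ω, (φ (w ω) + ⟪lam⁻¹ • (zbar - z ω), zhat - w ω⟫ -
      (φ (w ω) - G ω - ⟪lam⁻¹ • (zbar - z ω), w ω - z ω⟫)) ∂P ≤ φ zhat)
    (h₂ : ∫ ω, (φ (w ω) + 1 / (2 * lam) * ‖w ω - zbar‖ ^ 2 - G ω -
      1 / (2 * lam) * ‖z ω - zbar‖ ^ 2) ∂P ≤ ε) :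
    ∫ ω, (φ (w ω) + 1 / (2 * lam) * ‖w ω - zbar‖ ^ 2 + 1 / (2 * lam) * ‖zhat - z ω‖ ^ 2) ∂P ≤
      φ zhat + 1 / (2 * lam) * ‖zhat - zbar‖ ^ 2 + ε := by
  set I₁ : Ω → ℝ := fun ω =>
    G ω + 1 / (2 * lam) * (‖z ω - zbar‖ ^ 2 + ‖zhat - z ω‖ ^ 2 - ‖zhat - zbar‖ ^ 2)
  set I₂ : Ω → ℝ := fun ω =>
    φ (w ω) + 1 / (2 * lam) * ‖w ω - zbar‖ ^ 2 - G ω - 1 / (2 * lam) * ‖z ω - zbar‖ ^ 2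
  have hI₁ : ∫ ω, I₁ ω ∂P ≤ φ zhat := by
    refine le_of_eq_of_le (integral_congr_ae (.of_forall fun ω => ?_)) h₁
    simp only [I₁, ← inner_inv_smul_sub_sub_eq]
    rw [← sub_add_sub_cancel zhat (w ω) (z ω), inner_add_right]
    ring
  have hI₁_int : Integrable I₁ P :=
    hG.add (((hnz.add hnzz).sub (integrable_const _)).const_mul _)
  have hI₂_int : Integrable I₂ P := ((hφw.add (hnw.const_mul _)).sub hG).sub (hnz.const_mul _)
  calc _ = ∫ ω, (I₁ ω + I₂ ω + 1 / (2 * lam) * ‖zhat - zbar‖ ^ 2) ∂P := by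
        congr 1; funext ω; simp only [I₁, I₂]; ring
    _ = ∫ ω, I₁ ω ∂P + ∫ ω, I₂ ω ∂P + 1 / (2 * lam) * ‖zhat - zbar‖ ^ 2 := by
        rw [integral_add (f := fun ω => I₁ ω + I₂ ω) (hI₁_int.add hI₂_int) (integrable_const _),
          integral_add hI₁_int hI₂_int, integral_const, probReal_univ, one_smul]
    _ ≤ _ := by linarith

end

theorem stmt_14_general {d : ℕ} {Ω : Type*} [MeasurableSpace Ω] (P : Measure Ω)
    [IsProbabilityMeasure P]
    (f : EuclideanSpace ℝ (Fin d) → ℝ)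
    (μ : ℝ) (hμ : 0 < μ)
    (s : Set (EuclideanSpace ℝ (Fin d)))
    (hbd : Bornology.IsBounded s)
    (h : EuclideanSpace ℝ (Fin d) → ℝ)
    (lam : ℝ) (hlam : 0 < lam) (zbar : EuclideanSpace ℝ (Fin d))
    (ε : ℝ) (hε : 0 < ε)
    -- `ẑ` is the minimizer of the proximal subproblem:
    (zhat : EuclideanSpace ℝ (Fin d)) (hzhat_mem : zhat ∈ s)
    (hzhat_min : ∀ x ∈ s,
      (f zhat + h zhat) + 1 / (2 * lam) * ‖zhat - zbar‖ ^ 2 ≤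
        (f x + h x) + 1 / (2 * lam) * ‖x - zbar‖ ^ 2)
    (w z : Ω → EuclideanSpace ℝ (Fin d)) (G : Ω → ℝ)
    (hw_meas : AEStronglyMeasurable w P) (hz_meas : AEStronglyMeasurable z P)
    (hws : ∀ᵐ ω ∂P, w ω ∈ s) (hzs : ∀ᵐ ω ∂P, z ω ∈ s)
    (hG_int : Integrable G P)
    (hφw_int : Integrable (fun ω => f (w ω) + h (w ω)) P)
    -- (i)
    (hyp1 : ∀ x ∈ s,
      ∫ ω, ((f (w ω) + h (w ω)) + ⟪lam⁻¹ • (zbar - z ω), x - w ω⟫ -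
        ((f (w ω) + h (w ω)) - G ω - ⟪lam⁻¹ • (zbar - z ω), w ω - z ω⟫)) ∂P ≤ f x + h x)
    -- (ii)
    (hyp2 : ∫ ω, ((f (w ω) + h (w ω)) + 1 / (2 * lam) * ‖w ω - zbar‖ ^ 2 - G ω -
      1 / (2 * lam) * ‖z ω - zbar‖ ^ 2) ∂P ≤ ε) :
    (3 : ℝ≥0∞) / 4 ≤ P {ω |
      (f (w ω) + h (w ω)) + 1 / (2 * lam) * ‖w ω - zbar‖ ^ 2 -
        ((f zhat + h zhat) + 1 / (2 * lam) * ‖zhat - zbar‖ ^ 2) +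
        (1 + lam * μ) / (lam * (2 + lam * μ)) * ‖zhat - z ω‖ ^ 2 ≤ 8 * ε} := by
  have hnw := integrable_norm_sub_sq_of_ae_mem hw_meas hbd hws zbar
  have hnz := integrable_norm_sub_sq_of_ae_mem hz_meas hbd hzs zbar
  have hnzz : Integrable (fun ω => ‖zhat - z ω‖ ^ 2) P := by
    simpa only [norm_sub_rev] using integrable_norm_sub_sq_of_ae_mem hz_meas hbd hzs zhat
  have hgap := integral_prox_gap_le (φ := fun x => f x + h x) hφw_int hG_int hnw hnz hnzz
    (hyp1 zhat hzhat_mem) hyp2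
  have hc : (1 + lam * μ) / (lam * (2 + lam * μ)) ≤ 2 * (1 / (2 * lam)) := by
    rw [div_le_iff₀ (by positivity)]
    field_simp
    linarith
  have hmin := hws.mono fun ω hω => hzhat_min _ hω
  set Y : Ω → ℝ := fun ω => (f (w ω) + h (w ω)) + 1 / (2 * lam) * ‖w ω - zbar‖ ^ 2 -
    ((f zhat + h zhat) + 1 / (2 * lam) * ‖zhat - zbar‖ ^ 2) +
    (1 + lam * μ) / (lam * (2 + lam * μ)) * ‖zhat - z ω‖ ^ 2
  have hY_nonneg : 0 ≤ᵐ[P] Y := by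
    filter_upwards [hmin] with ω hω
    have hJ : 0 ≤ (1 + lam * μ) / (lam * (2 + lam * μ)) * ‖zhat - z ω‖ ^ 2 := by positivity
    simp only [Y, Pi.zero_apply]
    linarith
  have hY_int : Integrable Y P :=
    ((hφw_int.add (hnw.const_mul _)).sub (integrable_const _)).add (hnzz.const_mul _)
  have hEY : ∫ ω, Y ω ∂P ≤ 2 * ε :=
    integral_prox_excess_le (φ := fun x => f x + h x) hφw_int hnw hnzz hmin hc hgap
  calc (3 : ℝ≥0∞) / 4 = ENNReal.ofReal (1 - 2 * ε / (8 * ε)) := by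
        rw [show (1 : ℝ) - 2 * ε / (8 * ε) = 3 / 4 by field_simp; norm_num,
          ENNReal.ofReal_div_of_pos (by norm_num)]
        norm_num
    _ ≤ ENNReal.ofReal (1 - (∫ ω, Y ω ∂P) / (8 * ε)) := by gcongr
    _ ≤ _ := ofReal_one_sub_integral_div_le_measure_le hY_nonneg hY_int (by positivity)

/-- In the setting of Statement 13, with moreover
`ẑ = argmin { φ(x) + (1/(2λ))‖x - z̄‖² }`, assumptions (i) and (ii) imply that with
probability at least `3/4`,
`φ(w) + (1/(2λ))‖w - z̄‖² - φ(ẑ) - (1/(2λ))‖ẑ - z̄‖² + ((1+λμ)/(λ(2+λμ)))‖ẑ - z‖² ≤ 8ε`. -/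
theorem stmt_14 {d : ℕ} {Ω : Type*} [MeasurableSpace Ω] (P : Measure Ω)
    [IsProbabilityMeasure P]
    (f : EuclideanSpace ℝ (Fin d) → ℝ) (hf : Differentiable ℝ f)
    (μ : ℝ) (hμ : 0 < μ)
    (hsc : ConvexOn ℝ Set.univ (fun x => f x - μ / 2 * ‖x‖ ^ 2))
    (s : Set (EuclideanSpace ℝ (Fin d))) (hs : s.Nonempty) (hcl : IsClosed s)
    (hbd : Bornology.IsBounded s)
    (h : EuclideanSpace ℝ (Fin d) → ℝ) (hconv : ConvexOn ℝ s h)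
    (hlsc : LowerSemicontinuousOn h s)
    (lam : ℝ) (hlam : 0 < lam) (zbar : EuclideanSpace ℝ (Fin d)) (hzbar : zbar ∈ s)
    (ε : ℝ) (hε : 0 < ε)
    -- `ẑ` is the minimizer of the proximal subproblem:
    (zhat : EuclideanSpace ℝ (Fin d)) (hzhat_mem : zhat ∈ s)
    (hzhat_min : ∀ x ∈ s,
      (f zhat + h zhat) + 1 / (2 * lam) * ‖zhat - zbar‖ ^ 2 ≤
        (f x + h x) + 1 / (2 * lam) * ‖x - zbar‖ ^ 2)
    (w z : Ω → EuclideanSpace ℝ (Fin d)) (G : Ω → ℝ)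
    (hw_meas : AEStronglyMeasurable w P) (hz_meas : AEStronglyMeasurable z P)
    (hG_meas : AEStronglyMeasurable G P)
    (hws : ∀ᵐ ω ∂P, w ω ∈ s) (hzs : ∀ᵐ ω ∂P, z ω ∈ s)
    (hG_int : Integrable G P)
    (hφw_int : Integrable (fun ω => f (w ω) + h (w ω)) P)
    (hη_int : Integrable (fun ω =>
      (f (w ω) + h (w ω)) - G ω - ⟪lam⁻¹ • (zbar - z ω), w ω - z ω⟫) P)
    -- (i)
    (hyp1 : ∀ x ∈ s,
      ∫ ω, ((f (w ω) + h (w ω)) + ⟪lam⁻¹ • (zbar - z ω), x - w ω⟫ -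
        ((f (w ω) + h (w ω)) - G ω - ⟪lam⁻¹ • (zbar - z ω), w ω - z ω⟫)) ∂P ≤ f x + h x)
    -- (ii)
    (hyp2 : ∫ ω, ((f (w ω) + h (w ω)) + 1 / (2 * lam) * ‖w ω - zbar‖ ^ 2 - G ω -
      1 / (2 * lam) * ‖z ω - zbar‖ ^ 2) ∂P ≤ ε) :
    (3 : ℝ≥0∞) / 4 ≤ P {ω |
      (f (w ω) + h (w ω)) + 1 / (2 * lam) * ‖w ω - zbar‖ ^ 2 -
        ((f zhat + h zhat) + 1 / (2 * lam) * ‖zhat - zbar‖ ^ 2) +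
        (1 + lam * μ) / (lam * (2 + lam * μ)) * ‖zhat - z ω‖ ^ 2 ≤ 8 * ε} :=
  stmt_14_general P f μ hμ s hbd h lam hlam zbar ε hε zhat hzhat_mem hzhat_min w z G hw_meas hz_meas
    hws hzs hG_int hφw_int hyp1 hyp2
end
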